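/- arXiv:2312.03897 — 3 statements merged into one kernel-verified Lean document; each statement's English description precedes it below -/
import Mathlib

section
/- (Theorem 1, Zipf-optimal word lengths.) Let Σ be a finite alphabet and let P ⊆ Σ* be a nonempty, prefix-closed set of strings containing the empty string (the phonotactically valid wordforms) satisfying the constant phonotactic assumption with parameter K ≥ 2. Let V be a nonempty finite set of words and p a probability mass function on V with p(w) > 0 for every w ∈ V. Then there exists an injective lexicon φ : V → P assigning each word a phonotactically valid wordform such that for every w ∈ V, |φ(w)| ≤ −(1 / log_{|Σ|} K) · log_{|Σ|} p(w) + 1, i.e., |φ(w)| ≤ −log_K p(w) + 1. -/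
/-!
Give `w` the length `ℓ w = ⌈-log_K p(w)⌉`, so that `K ^ (-ℓ w) ≤ p w`. Since the probabilities
sum to one, at most `K ^ n` words get length `n`, so the words of each length can be coded
injectively by `K`-ary strings of exactly that length. Constant branching embeds the complete
`K`-ary tree into `P` level by level, which turns these codes into valid wordforms. Only
injectivity is required of a lexicon, so, unlike for Kraft's inequality, no prefix-freeness is
needed and the codes of different lengths need not be coordinated.
-/

open Function Finset Real

theorem card_fiber_le_pow_of_inv_pow_le {V : Type*} [Fintype V] {b : ℕ} (hb : 0 < b)
    {p : V → ℝ} (hsum : ∑ w, p w ≤ 1) {ℓ : V → ℕ} (hℓ : ∀ w, ((b : ℝ) ^ ℓ w)⁻¹ ≤ p w) (n : ℕ) :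
    Fintype.card {w // ℓ w = n} ≤ b ^ n := by
  classical
  have hp : ∀ w, 0 ≤ p w := fun w => (by positivity : (0 : ℝ) ≤ _).trans (hℓ w)
  have hbn : (0 : ℝ) < (b : ℝ) ^ n := by positivity
  have hmass : (#{w | ℓ w = n} : ℝ) * ((b : ℝ) ^ n)⁻¹ ≤ 1 :=
    calc (#{w | ℓ w = n} : ℝ) * ((b : ℝ) ^ n)⁻¹
        = #{w | ℓ w = n} • ((b : ℝ) ^ n)⁻¹ := (nsmul_eq_mul _ _).symm
      _ ≤ ∑ w ∈ {w | ℓ w = n}, p w :=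
          card_nsmul_le_sum _ _ _ fun w hw => (mem_filter.1 hw).2 ▸ hℓ w
      _ ≤ ∑ w, p w := sum_le_sum_of_subset_of_nonneg (subset_univ _) fun w _ _ => hp w
      _ ≤ 1 := hsum
  rw [Fintype.card_subtype]
  exact_mod_cast (mul_inv_le_iff₀ hbn).1 hmass |>.trans_eq (one_mul _)

theorem inv_pow_ceil_neg_logb_le {b x : ℝ} (hb : 1 < b) (hx : 0 < x) :
    (b ^ ⌈-logb b x⌉₊)⁻¹ ≤ x := by
  rw [← rpow_natCast, ← rpow_neg (by linarith), ← le_logb_iff_rpow_le hb hx]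
  linarith [Nat.le_ceil (-logb b x)]

theorem exists_injective_list_length_eq {A V : Type*} [Fintype A] [Fintype V] (ℓ : V → ℕ)
    (hℓ : ∀ n, Fintype.card {w // ℓ w = n} ≤ Fintype.card A ^ n) :
    ∃ c : V → List A, Injective c ∧ ∀ w, (c w).length = ℓ w := by
  have e : ∀ n, {w // ℓ w = n} ↪ List.Vector A n := fun n =>
    (Embedding.nonempty_of_card_le (by simpa only [card_vector] using hℓ n)).some
  refine ⟨Equiv.sigmaFiberEquiv List.length ∘ Sigma.map id (fun n => e n) ∘
      (Equiv.sigmaFiberEquiv ℓ).symm, ?_, fun w => (e (ℓ w) ⟨w, rfl⟩).2⟩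
  exact (Equiv.injective _).comp
    ((injective_id.sigma_map fun n => (e n).injective).comp (Equiv.injective _))

theorem exists_injective_length_eq_of_branching {A S : Type*} {P : Set (List S)}
    (hnil : [] ∈ P) (hbranch : ∀ α ∈ P, Nonempty (A ↪ {σ | α ++ [σ] ∈ P})) :
    ∃ g : List A → List S, Injective g ∧ (∀ l, g l ∈ P) ∧ ∀ l, (g l).length = l.length := by
  have j : ∀ α : P, A ↪ {σ | α.1 ++ [σ] ∈ P} := fun α => (hbranch α.1 α.2).some
  let child : A → P → P := fun a α => ⟨α.1 ++ [(j α a).1], (j α a).2⟩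
  have child_inj : ∀ a a' α α', child a α = child a' α' → α = α' ∧ a = a' := by
    intro a a' α α' h
    obtain ⟨hα, hσ⟩ := List.append_inj' (congrArg Subtype.val h) rfl
    obtain rfl : α = α' := Subtype.ext hα
    exact ⟨rfl, (j α).injective (Subtype.ext (List.singleton_injective hσ))⟩
  let g : List A → P := List.foldr child ⟨[], hnil⟩
  have length_g : ∀ l, (g l).1.length = l.length := by
    intro l
    induction l with
    | nil => rfl
    | cons a t ih => simp [g, child, ← ih]
  have g_inj : Injective g := by
    intro l₁ l₂ h
    have hlen : l₁.length = l₂.length := by rw [← length_g, ← length_g, h]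
    induction l₁ generalizing l₂ with
    | nil => exact (List.length_eq_zero_iff.1 hlen.symm).symm
    | cons a t ih =>
      obtain _ | ⟨a', t'⟩ := l₂
      · simp at hlen
      · obtain ⟨ht, rfl⟩ := child_inj a a' (g t) (g t') h
        rw [ih ht (Nat.succ_injective hlen)]
  exact ⟨fun l => (g l).1, Subtype.val_injective.comp g_inj, fun l => (g l).2, length_g⟩

theorem zipf_optimal_word_lengths_general {S V : Type*} [Fintype S] [Fintype V]
    (P : Set (List S)) (K : ℕ)
    (hnil : ([] : List S) ∈ P)
    (hK2 : 2 ≤ K) (hKle : K ≤ Fintype.card S)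
    (hconst : ∀ α ∈ P, Set.ncard {σ : S | α ++ [σ] ∈ P} = K)
    (p : V → ℝ) (hpos : ∀ w, 0 < p w) (hsum : ∑ w, p w = 1) :
    ∃ φ : V → List S, Function.Injective φ ∧ (∀ w, φ w ∈ P) ∧
      ∀ w, ((φ w).length : ℝ) ≤
          -(1 / Real.logb (Fintype.card S) K) * Real.logb (Fintype.card S) (p w) + 1 ∧
        ((φ w).length : ℝ) ≤ -Real.logb K (p w) + 1 := by
  classical
  have hK : (1 : ℝ) < K := by exact_mod_cast hK2
  have hS : (1 : ℝ) < Fintype.card S := by exact_mod_cast hK2.trans hKle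
  have hp_le_one : ∀ w, p w ≤ 1 := fun w =>
    hsum ▸ single_le_sum (fun v _ => (hpos v).le) (mem_univ w)
  obtain ⟨c, hc_inj, hc_len⟩ := exists_injective_list_length_eq (A := Fin K)
    (fun w => ⌈-logb K (p w)⌉₊) fun n => by
      simpa only [Fintype.card_fin] using card_fiber_le_pow_of_inv_pow_le (by omega) hsum.le
        (fun w => inv_pow_ceil_neg_logb_le hK (hpos w)) n
  obtain ⟨g, hg_inj, hg_mem, hg_len⟩ := exists_injective_length_eq_of_branching (A := Fin K) hnil
    fun α hα => Embedding.nonempty_of_card_le <| by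
      rw [Fintype.card_fin, ← Nat.card_eq_fintype_card, Nat.card_coe_set_eq, hconst α hα]
  refine ⟨g ∘ c, hg_inj.comp hc_inj, fun w => hg_mem _, fun w => ?_⟩
  have hlen : ((g (c w)).length : ℝ) ≤ -logb K (p w) + 1 := by
    rw [hg_len, hc_len]
    exact (Nat.ceil_lt_add_one (neg_nonneg.2 (logb_nonpos hK (hpos w).le (hp_le_one w)))).le
  refine ⟨?_, hlen⟩
  rwa [one_div, inv_logb, neg_mul, mul_logb (by positivity) hS.ne' (by linarith)]

/-- Theorem 1, Zipf-optimal word lengths: Given a phonotactically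
valid set `P` over a finite alphabet `S` satisfying the constant phonotactic
assumption with parameter `K ≥ 2`, and a positive probability mass function `p`
on a nonempty finite set of words `V`, there exists an injective lexicon
`φ : V → P` such that for every word `w`,
`|φ(w)| ≤ -(1 / log_{|S|} K) · log_{|S|} p(w) + 1`, i.e.,
`|φ(w)| ≤ -log_K p(w) + 1`. -/
theorem zipf_optimal_word_lengths {S V : Type*} [Fintype S] [Fintype V] [Nonempty V]
    (P : Set (List S)) (K : ℕ)
    (hnil : ([] : List S) ∈ P)
    (hpref : ∀ α ∈ P, ∀ β : List S, β <+: α → β ∈ P)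
    (hK2 : 2 ≤ K) (hKle : K ≤ Fintype.card S)
    (hconst : ∀ α ∈ P, Set.ncard {σ : S | α ++ [σ] ∈ P} = K)
    (p : V → ℝ) (hpos : ∀ w, 0 < p w) (hsum : ∑ w, p w = 1) :
    ∃ φ : V → List S, Function.Injective φ ∧ (∀ w, φ w ∈ P) ∧
      ∀ w, ((φ w).length : ℝ) ≤
          -(1 / Real.logb (Fintype.card S) K) * Real.logb (Fintype.card S) (p w) + 1 ∧
        ((φ w).length : ℝ) ≤ -Real.logb K (p w) + 1 :=
  zipf_optimal_word_lengths_general P K hnil hK2 hKle hconst p hpos hsum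
end

section
/- (Theorem 2, CCH-optimal word lengths.) Let V be a nonempty finite set of words and, for each w ∈ V, a nonempty finite set C_w of contexts. Let p be a probability mass function on pairs (w, c) with w ∈ V and c ∈ C_w, with marginal p(w) = Σ_{c∈C_w} p(w,c) > 0 for every w and conditional p(c|w) = p(w,c)/p(w). Let h(w,c) ≥ 0 denote the surprisal of word w in context c, let C > 0 be the channel capacity, and assume for every w ∈ V that H̄(w) := Σ_{c∈C_w} p(c|w) h(w,c) > 0. Define the CCH cost of a length assignment L : V → ℝ_{>0} as cost(L) = Σ_{w∈V} Σ_{c∈C_w} p(w,c)·(h(w,c)/L(w) − C)². Then the length assignment L*(w) = (1/C) · (Σ_{c∈C_w} p(c|w) h(w,c)²) / (Σ_{c∈C_w} p(c|w) h(w,c)) satisfies cost(L*) ≤ cost(L) for every L : V → ℝ_{>0}. -/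
/-!
For each word the CCH cost is a weighted least-squares problem in the reciprocal length
`s = 1 / L(w)`: with `A = Σ_c p(w,c) h(w,c)²` and `B = Σ_c p(w,c) h(w,c)` it is the quadratic
`A s² - 2 C B s + C² p(w)`, which exceeds its value at `s* = C B / A` by exactly `A (s - s*)²`.
Since `1 / L*(w) = s*`, every word separately has minimal cost at `L*`.
-/

section WeightedLeastSquares

variable {ι : Type*} (S : Finset ι) (q x : ι → ℝ)

theorem sum_mul_sq_mul_sub_eq_add {C s₀ : ℝ}
    (hs₀ : (∑ i ∈ S, q i * x i ^ 2) * s₀ = C * ∑ i ∈ S, q i * x i) (s : ℝ) :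
    ∑ i ∈ S, q i * (x i * s - C) ^ 2 =
      ∑ i ∈ S, q i * (x i * s₀ - C) ^ 2 + (∑ i ∈ S, q i * x i ^ 2) * (s - s₀) ^ 2 := by
  have expand : ∀ t, ∑ i ∈ S, q i * (x i * t - C) ^ 2 =
      (∑ i ∈ S, q i * x i ^ 2) * t ^ 2 - 2 * C * (∑ i ∈ S, q i * x i) * t +
        C ^ 2 * ∑ i ∈ S, q i := by
    intro t
    simp only [Finset.mul_sum, Finset.sum_mul, ← Finset.sum_sub_distrib, ← Finset.sum_add_distrib]
    exact Finset.sum_congr rfl fun i _ => by ring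
  rw [expand, expand]
  linear_combination (2 * s - 2 * s₀) * hs₀

variable {S q}

theorem sum_mul_eq_zero_of_sum_mul_sq_eq_zero (hq : ∀ i ∈ S, 0 ≤ q i)
    (hA : ∑ i ∈ S, q i * x i ^ 2 = 0) : ∑ i ∈ S, q i * x i = 0 := by
  have hterm := (Finset.sum_eq_zero_iff_of_nonneg fun i hi =>
    mul_nonneg (hq i hi) (sq_nonneg (x i))).mp hA
  refine Finset.sum_eq_zero fun i hi => ?_
  rcases mul_eq_zero.mp (hterm i hi) with hqi | hxi
  · rw [hqi, zero_mul]
  · rw [pow_eq_zero_iff two_ne_zero |>.mp hxi, mul_zero]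

/-- The junk values of `/` make this true also when `C`, `Σ q x` or `Σ q x²` vanish. -/
theorem sum_mul_sq_div_sub_le (hq : ∀ i ∈ S, 0 ≤ q i) (C L : ℝ) :
    ∑ i ∈ S, q i * (x i / ((1 / C) * (∑ i ∈ S, q i * x i ^ 2) / ∑ i ∈ S, q i * x i) - C) ^ 2 ≤
      ∑ i ∈ S, q i * (x i / L - C) ^ 2 := by
  set A := ∑ i ∈ S, q i * x i ^ 2
  set B := ∑ i ∈ S, q i * x i
  have hopt : A * (C * B / A) = C * B := by
    rcases eq_or_ne A 0 with hA | hA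
    · simp [hA, B, sum_mul_eq_zero_of_sum_mul_sq_eq_zero x hq hA]
    · field_simp
  have hA : 0 ≤ A := Finset.sum_nonneg fun i hi => mul_nonneg (hq i hi) (sq_nonneg (x i))
  have hinv : ((1 / C) * A / B)⁻¹ = C * B / A := by
    rw [inv_div, one_div, mul_comm C⁻¹, ← div_eq_mul_inv, div_div_eq_mul_div, mul_comm]
  simp only [div_eq_mul_inv (x _), hinv]
  rw [sum_mul_sq_mul_sub_eq_add S q x hopt L⁻¹]
  exact le_add_of_nonneg_right (mul_nonneg hA (sq_nonneg _))

end WeightedLeastSquares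

theorem sum_mul_eq_mul_sum_div {ι : Type*} (S : Finset ι) (p f : ι → ℝ) {m : ℝ} (hm : m ≠ 0) :
    ∑ i ∈ S, p i * f i = m * ∑ i ∈ S, p i / m * f i := by
  rw [Finset.mul_sum]
  exact Finset.sum_congr rfl fun i _ => by field_simp

theorem cch_optimal_word_lengths_general {V Ctx : Type*} [Fintype V]
    (Cw : V → Finset Ctx)
    (p : V → Ctx → ℝ) (hp : ∀ w, ∀ c ∈ Cw w, 0 ≤ p w c)
    (pw : V → ℝ)
    (hpwpos : ∀ w, 0 < pw w)
    (h : V → Ctx → ℝ)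
    (C : ℝ)
    (cost : (V → ℝ) → ℝ)
    (hcost : ∀ L, cost L = ∑ w, ∑ c ∈ Cw w, p w c * (h w c / L w - C) ^ 2)
    (Lstar : V → ℝ)
    (hLstar : ∀ w, Lstar w =
      (1 / C) * (∑ c ∈ Cw w, (p w c / pw w) * (h w c) ^ 2) /
        (∑ c ∈ Cw w, (p w c / pw w) * h w c)) :
    ∀ L : V → ℝ, (∀ w, 0 < L w) → cost Lstar ≤ cost L := by
  intro L _
  rw [hcost, hcost]
  refine Finset.sum_le_sum fun w _ => ?_
  have hpw := hpwpos w
  have hcond_nonneg : ∀ c ∈ Cw w, 0 ≤ p w c / pw w := fun c hc => div_nonneg (hp w c hc) hpw.le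
  calc ∑ c ∈ Cw w, p w c * (h w c / Lstar w - C) ^ 2
      = pw w * ∑ c ∈ Cw w, p w c / pw w * (h w c / Lstar w - C) ^ 2 :=
        sum_mul_eq_mul_sum_div _ _ _ hpw.ne'
    _ ≤ pw w * ∑ c ∈ Cw w, p w c / pw w * (h w c / L w - C) ^ 2 := by
        rw [hLstar w]
        exact mul_le_mul_of_nonneg_left (sum_mul_sq_div_sub_le (h w) hcond_nonneg C (L w)) hpw.le
    _ = ∑ c ∈ Cw w, p w c * (h w c / L w - C) ^ 2 :=
        (sum_mul_eq_mul_sum_div _ _ _ hpw.ne').symm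

/-- Theorem 2, CCH-optimal word lengths: The length assignment
`L*(w) = (1/C) · (Σ_c p(c|w) h(w,c)²) / (Σ_c p(c|w) h(w,c))` minimizes the
CCH cost `Σ_w Σ_c p(w,c) · (h(w,c)/L(w) − C)²` over all positive length
assignments `L : V → ℝ_{>0}`. -/
theorem cch_optimal_word_lengths {V Ctx : Type*} [Fintype V] [Nonempty V]
    (Cw : V → Finset Ctx) (hCw : ∀ w, (Cw w).Nonempty)
    (p : V → Ctx → ℝ) (hp : ∀ w, ∀ c ∈ Cw w, 0 ≤ p w c)
    (hsum : ∑ w, ∑ c ∈ Cw w, p w c = 1)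
    (pw : V → ℝ) (hpw : ∀ w, pw w = ∑ c ∈ Cw w, p w c)
    (hpwpos : ∀ w, 0 < pw w)
    (h : V → Ctx → ℝ) (hh : ∀ w, ∀ c ∈ Cw w, 0 ≤ h w c)
    (C : ℝ) (hC : 0 < C)
    (Hbar : V → ℝ) (hHbar : ∀ w, Hbar w = ∑ c ∈ Cw w, (p w c / pw w) * h w c)
    (hHpos : ∀ w, 0 < Hbar w)
    (cost : (V → ℝ) → ℝ)
    (hcost : ∀ L, cost L = ∑ w, ∑ c ∈ Cw w, p w c * (h w c / L w - C) ^ 2)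
    (Lstar : V → ℝ)
    (hLstar : ∀ w, Lstar w =
      (1 / C) * (∑ c ∈ Cw w, (p w c / pw w) * (h w c) ^ 2) /
        (∑ c ∈ Cw w, (p w c / pw w) * h w c)) :
    ∀ L : V → ℝ, (∀ w, 0 < L w) → cost Lstar ≤ cost L :=
  cch_optimal_word_lengths_general Cw p hp pw hpwpos h C cost hcost Lstar hLstar
end

section
/- (Theorem 3, CCH↓-optimal word lengths.) Let V be a nonempty finite set of words and, for each w ∈ V, a nonempty finite set C_w of contexts. Let p be a probability mass function on pairs (w, c) with w ∈ V and c ∈ C_w, with marginal p(w) = Σ_{c∈C_w} p(w,c) > 0 for every w and conditional p(c|w) = p(w,c)/p(w). Let h(w,c) ≥ 0 denote the surprisal of word w in context c, let C > 0 be the channel capacity, and assume for every w ∈ V that the average surprisal H̄(w) := Σ_{c∈C_w} p(c|w) h(w,c) is strictly positive. Let d : ℝ × ℝ → ℝ be any function satisfying non-negativity (d(x,y) ≥ 0 for all x, y) and identity of indiscernibles (d(x,y) = 0 if and only if x = y). Define the CCH↓ cost of a length assignment L : V → ℝ_{>0} as cost↓(L) = Σ_{w∈V} p(w)·d(H̄(w)/L(w),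 C). Then the length assignment L*(w) = H̄(w)/C satisfies cost↓(L*) = 0 and hence cost↓(L*) ≤ cost↓(L) for every L : V → ℝ_{>0}. -/
open Finset

theorem cch_lower_optimal_word_lengths_general {V : Type*} [Fintype V]
    (pw : V → ℝ) (hpwpos : ∀ w, 0 < pw w) (C : ℝ) (Hbar : V → ℝ) (hHpos : ∀ w, 0 < Hbar w)
    (d : ℝ → ℝ → ℝ) (hd0 : ∀ x y, 0 ≤ d x y) (hdeq : ∀ x y, d x y = 0 ↔ x = y)
    (cost : (V → ℝ) → ℝ)
    (hcost : ∀ L, cost L = ∑ w, pw w * d (Hbar w / L w) C)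
    (Lstar : V → ℝ) (hLstar : ∀ w, Lstar w = Hbar w / C) :
    cost Lstar = 0 ∧ ∀ L : V → ℝ, (∀ w, 0 < L w) → cost Lstar ≤ cost L := by
  have hrate : ∀ w, Hbar w / Lstar w = C := fun w => by
    rw [hLstar, div_div_cancel₀ (hHpos w).ne']
  have hzero : cost Lstar = 0 := by
    simp only [hcost, hrate, (hdeq C C).mpr rfl, mul_zero, sum_const_zero]
  refine ⟨hzero, fun L _ => ?_⟩
  rw [hzero, hcost]
  exact sum_nonneg fun w _ => mul_nonneg (hpwpos w).le (hd0 _ _)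

/-- Theorem 3, CCH↓-optimal word lengths: For any deviation
function `d` satisfying non-negativity and identity of indiscernibles, the
length assignment `L*(w) = H̄(w)/C` achieves zero CCH↓ cost
`Σ_w p(w) · d(H̄(w)/L(w), C)`, hence minimizes it over all positive length
assignments. -/
theorem cch_lower_optimal_word_lengths {V Ctx : Type*} [Fintype V] [Nonempty V]
    (Cw : V → Finset Ctx) (hCw : ∀ w, (Cw w).Nonempty)
    (p : V → Ctx → ℝ) (hp : ∀ w, ∀ c ∈ Cw w, 0 ≤ p w c)
    (hsum : ∑ w, ∑ c ∈ Cw w, p w c = 1)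
    (pw : V → ℝ) (hpw : ∀ w, pw w = ∑ c ∈ Cw w, p w c)
    (hpwpos : ∀ w, 0 < pw w)
    (h : V → Ctx → ℝ) (hh : ∀ w, ∀ c ∈ Cw w, 0 ≤ h w c)
    (C : ℝ) (hC : 0 < C)
    (Hbar : V → ℝ) (hHbar : ∀ w, Hbar w = ∑ c ∈ Cw w, (p w c / pw w) * h w c)
    (hHpos : ∀ w, 0 < Hbar w)
    (d : ℝ → ℝ → ℝ) (hd0 : ∀ x y, 0 ≤ d x y) (hdeq : ∀ x y, d x y = 0 ↔ x = y)
    (cost : (V → ℝ) → ℝ)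
    (hcost : ∀ L, cost L = ∑ w, pw w * d (Hbar w / L w) C)
    (Lstar : V → ℝ) (hLstar : ∀ w, Lstar w = Hbar w / C) :
    cost Lstar = 0 ∧ ∀ L : V → ℝ, (∀ w, 0 < L w) → cost Lstar ≤ cost L :=
  cch_lower_optimal_word_lengths_general pw hpwpos C Hbar hHpos d hd0 hdeq cost hcost Lstar hLstar
end
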